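/- arXiv:2207.11272 — 4 statements merged into one kernel-verified Lean document; each statement's English description precedes it below -/
import Mathlib

section
/- Every Eulerian tournament D satisfies: the real nullspace of its skew adjacency matrix A_D equals the span of the all-ones vector (in particular, the nullspace is one-dimensional). -/
open Finset

/-- A digraph: finite vertex set, no loops, at most one arc per pair. -/
structure Digraph' (V : Type) where
  Adj : V → V → Bool
  irrefl : ∀ v, Adj v v = false
  asymm : ∀ u v, Adj u v = true → Adj v u = false

namespace Digraph'

variable {V : Type} [Fintype V] [DecidableEq V] (D : Digraph' V)

/-- Out-neighborhood N⁺(v). -/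
def outN (v : V) : Finset V := univ.filter fun u => D.Adj v u
/-- In-neighborhood N⁻(v). -/
def inN (v : V) : Finset V := univ.filter fun u => D.Adj u v

/-- max over vertices v of Σ_{u∈N⁺(v)} p u − Σ_{u∈N⁻(v)} p u. -/
noncomputable def payoff (p : V → ℝ) : ℝ :=
  sSup (Set.range fun v => (∑ u ∈ D.outN v, p u) - ∑ u ∈ D.inN v, p u)

/-- Auxiliary (fuel-indexed) definition of the value of the semi-restricted D-game. -/
noncomputable def valueAux : ℕ → (V → ℕ) → ℝ
  | 0, _ => 0
  | (n+1), r =>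
    if ∀ u, r u = 0 then 0
    else sInf { x : ℝ | ∃ p : V → ℝ, (∀ u, 0 ≤ p u) ∧ (∑ u, p u = 1) ∧
      (∀ u, p u ≠ 0 → r u ≠ 0) ∧
      x = D.payoff p + ∑ u, p u * valueAux n (fun w => r w - if w = u then 1 else 0) }

/-- The value S_D(r) of the semi-restricted D-game with restriction vector r. -/
noncomputable def value (r : V → ℕ) : ℝ := D.valueAux (∑ u, r u) r

end Digraph'

/-- A strategy for Rei in the semi-restricted D-game. -/
structure ReiStrategy {V : Type} [Fintype V] [DecidableEq V] (D : Digraph' V) where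
  play : (V → ℕ) → V → ℝ
  nonneg : ∀ r : V → ℕ, (¬ ∀ u, r u = 0) → ∀ u, 0 ≤ play r u
  sum_one : ∀ r : V → ℕ, (¬ ∀ u, r u = 0) → ∑ u, play r u = 1
  supp : ∀ r : V → ℕ, (¬ ∀ u, r u = 0) → ∀ u, play r u ≠ 0 → r u ≠ 0

namespace Digraph'

variable {V : Type} [Fintype V] [DecidableEq V] (D : Digraph' V)

/-- Auxiliary (fuel-indexed) value of Rei's strategy R. -/
noncomputable def stratValueAux (R : ReiStrategy D) : ℕ → (V → ℕ) → ℝ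
  | 0, _ => 0
  | (n+1), r =>
    if ∀ u, r u = 0 then 0
    else D.payoff (R.play r) +
      ∑ u, R.play r u * stratValueAux R n (fun w => r w - if w = u then 1 else 0)

/-- The value S_D(r; R) of Rei's strategy R at restriction vector r. -/
noncomputable def stratValue (R : ReiStrategy D) (r : V → ℕ) : ℝ :=
  D.stratValueAux R (∑ u, r u) r

/-- A strategy for Rei is optimal if its value equals the game value at every restriction vector. -/
def IsOptimal (R : ReiStrategy D) : Prop := ∀ r : V → ℕ, D.stratValue R r = D.value r

/-- A strategy is oblivious if it only depends on the support of the restriction vector. -/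
def IsOblivious (R : ReiStrategy D) : Prop :=
  ∀ r r' : V → ℕ, (∀ u, r u ≠ 0 ↔ r' u ≠ 0) → R.play r = R.play r'

/-- A digraph is oblivious if Rei has an oblivious optimal strategy. -/
def Oblivious : Prop := ∃ R : ReiStrategy D, D.IsOptimal R ∧ D.IsOblivious R

/-- A tournament: exactly one arc between any two distinct vertices. -/
def IsTournament : Prop := ∀ u v : V, u ≠ v → (D.Adj u v = true ∨ D.Adj v u = true)

/-- Eulerian: every vertex has equal in- and out-degree. -/
def IsEulerian : Prop := ∀ v : V, (D.outN v).card = (D.inN v).card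

/-- The skew adjacency matrix of a digraph. -/
def skewAdj : Matrix V V ℝ := fun u v =>
  if D.Adj u v then 1 else if D.Adj v u then -1 else 0

end Digraph'

namespace Digraph'
variable {V : Type} [Fintype V] [DecidableEq V] (D : Digraph' V)

lemma rowsum (hE : D.IsEulerian) (u : V) : ∑ w, D.skewAdj u w = 0 := by
  have h : ∀ w, D.skewAdj u w =
      (if D.Adj u w then (1:ℝ) else 0) - (if D.Adj w u then (1:ℝ) else 0) := by
    intro w
    unfold skewAdj
    by_cases h1 : D.Adj u w
    · simp [h1, D.asymm u w h1]
    · simp only [h1]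
      split_ifs <;> simp_all
  simp only [h, Finset.sum_sub_distrib]
  have h1 : ∑ w, (if D.Adj u w then (1:ℝ) else 0) = (D.outN u).card := by
    rw [← Finset.sum_filter]; simp [outN]
  have h2 : ∑ w, (if D.Adj w u then (1:ℝ) else 0) = (D.inN u).card := by
    rw [← Finset.sum_filter]; simp [inN]
  rw [h1, h2, hE u]; ring

lemma mulVec_const (hE : D.IsEulerian) (c : ℝ) :
    D.skewAdj.mulVec (fun _ => c) = 0 := by
  funext u
  simp only [Matrix.mulVec, dotProduct, Pi.zero_apply]
  rw [← Finset.sum_mul, rowsum D hE u, zero_mul]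

lemma card_even (hT : D.IsTournament) (hE : D.IsEulerian) (v : V) :
    Fintype.card V - 1 = 2 * (D.outN v).card := by
  have hdisj : Disjoint (D.outN v) (D.inN v) := by
    rw [Finset.disjoint_left]
    intro u hu hu'
    simp only [outN, inN, Finset.mem_filter] at hu hu'
    exact absurd hu'.2 (by simp [D.asymm v u hu.2])
  have hunion : D.outN v ∪ D.inN v = univ.erase v := by
    ext u
    simp only [outN, inN, Finset.mem_union, Finset.mem_filter, Finset.mem_erase,
      Finset.mem_univ, and_true, true_and]
    constructor
    · rintro (h | h) rfl <;> (rw [D.irrefl] at h; exact absurd h (by simp))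
    · intro h
      rcases hT v u (Ne.symm h) with h' | h' <;> simp [h']
  have := Finset.card_union_of_disjoint hdisj
  rw [hunion, Finset.card_erase_of_mem (mem_univ v), Finset.card_univ] at this
  rw [this, hE v]; ring
end Digraph'


namespace Digraph'
variable {V : Type} [Fintype V] [DecidableEq V] (D : Digraph' V)

lemma subdet_ne_zero (hT : D.IsTournament) (hE : D.IsEulerian) (v0 : V) :
    (Matrix.of fun i j : {u : V // u ≠ v0} =>
      (if D.Adj i.1 j.1 then (1:ℤ) else if D.Adj j.1 i.1 then -1 else 0)).det ≠ 0 := by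
  set S := {u : V // u ≠ v0} with hS
  set Bz : Matrix S S ℤ := Matrix.of fun i j =>
      (if D.Adj i.1 j.1 then (1:ℤ) else if D.Adj j.1 i.1 then -1 else 0) with hBz
  have hmap : Bz.map (Int.cast : ℤ → ZMod 2) =
      1 + Matrix.replicateCol Unit (fun _ : S => (1:ZMod 2)) *
        Matrix.replicateRow Unit (fun _ : S => (1:ZMod 2)) := by
    ext i j
    rw [Matrix.map_apply]
    by_cases h : i = j
    · subst h
      simp only [hBz, Matrix.of_apply, D.irrefl, Bool.false_eq_true, if_false, Int.cast_zero,
        Matrix.add_apply, Matrix.one_apply_eq, Matrix.mul_apply, Matrix.replicateCol_apply,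
        Matrix.replicateRow_apply, one_mul, Finset.sum_const, Finset.card_univ]
      decide
    · have hv : i.1 ≠ j.1 := fun he => h (Subtype.ext he)
      have hne : (1 : Matrix S S (ZMod 2)) i j = 0 := Matrix.one_apply_ne h
      rcases hT i.1 j.1 hv with h' | h' <;>
        simp only [hBz, Matrix.of_apply, h', if_true, D.asymm _ _ h', Bool.false_eq_true,
          if_false, Int.cast_one, Int.cast_neg, Matrix.add_apply, hne, Matrix.mul_apply,
          Matrix.replicateCol_apply, Matrix.replicateRow_apply, one_mul, Finset.sum_const,
          Finset.card_univ, zero_add] <;> decide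
  have h1 : Fintype.card S = Fintype.card V - 1 := by
    have h2 := Fintype.card_subtype_compl (fun u : V => u = v0)
    rw [Fintype.card_subtype_eq] at h2
    exact h2
  have hcard : (Fintype.card S : ZMod 2) = 0 := by
    rw [h1, D.card_even hT hE v0]
    push_cast
    rw [show ((2:ZMod 2)) = 0 by decide, zero_mul]
  have hdet2 : (Bz.map (Int.cast : ℤ → ZMod 2)).det = 1 := by
    rw [hmap, Matrix.det_one_add_replicateCol_mul_replicateRow]
    simp [dotProduct, hcard]
  intro h0
  have h3 := (Int.castRingHom (ZMod 2)).map_det Bz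
  rw [RingHom.mapMatrix_apply] at h3
  simp only [Int.coe_castRingHom] at h3
  rw [h0, hdet2] at h3
  simp at h3

end Digraph'


theorem eulerian_tournament_nullspace {V : Type} [Fintype V] [DecidableEq V]
    (D : Digraph' V) (hT : D.IsTournament) (hE : D.IsEulerian) :
    ∀ x : V → ℝ, D.skewAdj.mulVec x = 0 ↔ ∃ c : ℝ, x = fun _ => c := by
  intro x
  constructor
  · intro hx
    rcases isEmpty_or_nonempty V with hV | hV
    · exact ⟨0, funext fun v => (IsEmpty.false v).elim⟩
    obtain ⟨v0⟩ := hV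
    refine ⟨x v0, ?_⟩
    set y : V → ℝ := fun u => x u - x v0 with hy
    have hAy : D.skewAdj.mulVec y = 0 := by
      have : y = x - (fun _ => x v0) := rfl
      rw [this, Matrix.mulVec_sub, hx, D.mulVec_const hE, sub_zero]
    set S := {u : V // u ≠ v0}
    set Bz : Matrix S S ℤ := Matrix.of fun i j =>
        (if D.Adj i.1 j.1 then (1:ℤ) else if D.Adj j.1 i.1 then -1 else 0) with hBz
    set Br : Matrix S S ℝ := Bz.map (Int.cast : ℤ → ℝ) with hBr
    have hBrdet : Br.det ≠ 0 := by
      have h3 := (Int.castRingHom ℝ).map_det Bz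
      rw [RingHom.mapMatrix_apply] at h3
      simp only [Int.coe_castRingHom] at h3
      rw [hBr, ← h3]
      have := D.subdet_ne_zero hT hE v0
      exact_mod_cast this
    have hBA : ∀ i j : S, Br i j = D.skewAdj i.1 j.1 := by
      intro i j
      simp only [hBr, hBz, Matrix.map_apply, Matrix.of_apply, Digraph'.skewAdj]
      split_ifs <;> simp
    have hmul : Br.mulVec (fun i : S => y i.1) = 0 := by
      funext j
      have h0 : (D.skewAdj.mulVec y) j.1 = 0 := by rw [hAy]; rfl
      simp only [Matrix.mulVec, dotProduct] at h0 ⊢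
      rw [← Finset.add_sum_erase univ (fun u => D.skewAdj j.1 u * y u) (mem_univ v0)] at h0
      have hyv0 : y v0 = 0 := by simp [hy]
      rw [hyv0, mul_zero, zero_add] at h0
      rw [Finset.sum_subtype (p := fun u => u ≠ v0) (univ.erase v0)
        (fun u => by simp) (fun u => D.skewAdj j.1 u * y u)] at h0
      simp only [Pi.zero_apply]
      rw [← h0]
      exact Finset.sum_congr rfl fun i _ => by rw [hBA j i]
    have hy0 : (fun i : S => y i.1) = 0 := by
      by_contra hne
      exact hBrdet (Matrix.exists_mulVec_eq_zero_iff.mp ⟨_, hne, hmul⟩)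
    funext u
    by_cases hu : u = v0
    · rw [hu]
    · have := congrFun hy0 ⟨u, hu⟩
      simp only [Pi.zero_apply, hy] at this
      linarith
  · rintro ⟨c, rfl⟩
    exact D.mulVec_const hE c
end

section
/- Let D be an oblivious digraph and let R be an oblivious optimal strategy for Rei in the semi-restricted D-game. Let S ⊆ V(D) be nonempty, and let p be the probability vector with p_u = R(r)_u for every restriction vector r with supp(r) = S (well-defined since R is oblivious). Suppose v ∈ S is such that there exists a nonnegative real vector q indexed by V(D) with supp(q) = S and Σ_{u ∈ N^+(v)} q_u − Σ_{u ∈ N^-(v)} q_u = max_{w ∈ V(D)} ( Σ_{u ∈ N^+(w)} q_u − Σ_{u ∈ N^-(w)} q_u ). Then Σ_{u ∈ N^+(v)} p_u − Σ_{u ∈ N^-(v)} p_u = max_{w ∈ V(D)} ( Σ_{u ∈ N^+(w)} p_u − Σ_{u ∈ N^-(w)} p_u ). -/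
open Finset

set_option linter.unusedSectionVars false

namespace SRAux
open Digraph'
variable {V : Type} [Fintype V] [DecidableEq V] [Nonempty V] (D : Digraph' V)

/-- payoff of basis direction -/
def fval (x : V → ℝ) (w : V) : ℝ := (∑ u ∈ D.outN w, x u) - ∑ u ∈ D.inN w, x u

lemma payoff_eq (x : V → ℝ) : D.payoff x = sSup (Set.range (fval D x)) := rfl

lemma fval_le_payoff (x : V → ℝ) (w : V) : fval D x w ≤ D.payoff x :=
  le_csSup (Set.finite_range _).bddAbove ⟨w, rfl⟩

lemma payoff_le {x : V → ℝ} {c : ℝ} (h : ∀ w, fval D x w ≤ c) : D.payoff x ≤ c := by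
  refine csSup_le (Set.range_nonempty _) ?_
  rintro y ⟨w, rfl⟩; exact h w

lemma fval_le_one {x : V → ℝ} (h0 : ∀ u, 0 ≤ x u) (h1 : ∑ u, x u = 1) (w : V) :
    fval D x w ≤ 1 := by
  have h2 : ∑ u ∈ D.outN w, x u ≤ ∑ u, x u :=
    Finset.sum_le_sum_of_subset_of_nonneg (Finset.subset_univ _) (fun i _ _ => h0 i)
  have h3 : (0:ℝ) ≤ ∑ u ∈ D.inN w, x u := Finset.sum_nonneg fun i _ => h0 i
  unfold fval; linarith [h1 ▸ h2]

lemma neg_one_le_fval {x : V → ℝ} (h0 : ∀ u, 0 ≤ x u) (h1 : ∑ u, x u = 1) (w : V) :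
    (-1:ℝ) ≤ fval D x w := by
  have h2 : ∑ u ∈ D.inN w, x u ≤ ∑ u, x u :=
    Finset.sum_le_sum_of_subset_of_nonneg (Finset.subset_univ _) (fun i _ _ => h0 i)
  have h3 : (0:ℝ) ≤ ∑ u ∈ D.outN w, x u := Finset.sum_nonneg fun i _ => h0 i
  unfold fval; linarith [h1 ▸ h2]

lemma payoff_le_one {x : V → ℝ} (h0 : ∀ u, 0 ≤ x u) (h1 : ∑ u, x u = 1) :
    D.payoff x ≤ 1 := payoff_le D fun w => fval_le_one D h0 h1 w

lemma neg_one_le_payoff {x : V → ℝ} (h0 : ∀ u, 0 ≤ x u) (h1 : ∑ u, x u = 1) :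
    (-1:ℝ) ≤ D.payoff x :=
  le_trans (neg_one_le_fval D h0 h1 (Classical.arbitrary V)) (fval_le_payoff D x _)

set_option linter.unusedSectionVars false

/-- decremented restriction vector -/
def dec (r : V → ℕ) (u : V) : V → ℕ := fun w => r w - if w = u then 1 else 0

lemma sum_dec_nat {r : V → ℕ} {u : V} (h : r u ≠ 0) :
    ∑ w, dec r u w = (∑ w, r w) - 1 := by
  have h1 : ∑ w ∈ univ.erase u, dec r u w + dec r u u = ∑ w, dec r u w :=
    Finset.sum_erase_add _ _ (Finset.mem_univ u)
  have h2 : ∑ w ∈ univ.erase u, r w + r u = ∑ w, r w :=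
    Finset.sum_erase_add _ _ (Finset.mem_univ u)
  have h3 : ∑ w ∈ univ.erase u, dec r u w = ∑ w ∈ univ.erase u, r w :=
    Finset.sum_congr rfl fun w hw => by
      simp [dec, if_neg (Finset.ne_of_mem_erase hw)]
  have h4 : dec r u u = r u - 1 := by simp [dec]
  omega

lemma sum_pos_of_ne {r : V → ℕ} {u : V} (h : r u ≠ 0) : ∑ w, r w ≠ 0 := by
  have := Finset.single_le_sum (f := r) (fun i _ => Nat.zero_le _) (Finset.mem_univ u)
  omega

lemma cast_dec {r : V → ℕ} {u : V} (h : r u ≠ 0) (w : V) :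
    ((dec r u w : ℕ) : ℝ) = (r w : ℝ) - (if w = u then 1 else 0) := by
  unfold dec
  rcases eq_or_ne w u with rfl | hw
  · rw [if_pos rfl, if_pos rfl, Nat.cast_sub (Nat.one_le_iff_ne_zero.mpr h), Nat.cast_one]
  · rw [if_neg hw, if_neg hw, Nat.sub_zero, sub_zero]

lemma sum_cast_dec {r : V → ℕ} {u : V} (h : r u ≠ 0) (A : Finset V) :
    ∑ w ∈ A, ((dec r u w : ℕ) : ℝ) = (∑ w ∈ A, (r w : ℝ)) - (if u ∈ A then 1 else 0) := by
  rw [Finset.sum_congr rfl (fun w _ => cast_dec h w), Finset.sum_sub_distrib,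
    Finset.sum_ite_eq' A u (fun _ => (1:ℝ))]

/-- single-step payoff coefficient at v  -/
def evec (v u : V) : ℝ := (if u ∈ D.outN v then 1 else 0) - (if u ∈ D.inN v then 1 else 0)

/-- F r = fval of the cast of r, at v -/
def Fv (v : V) (r : V → ℕ) : ℝ := fval D (fun w => (r w : ℝ)) v

lemma Fv_dec {r : V → ℕ} {u : V} (h : r u ≠ 0) (v : V) :
    Fv D v (dec r u) = Fv D v r - evec D v u := by
  unfold Fv fval evec
  rw [sum_cast_dec h, sum_cast_dec h]; ring

lemma sum_mul_ind (x : V → ℝ) (A : Finset V) :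
    ∑ u, x u * (if u ∈ A then (1:ℝ) else 0) = ∑ u ∈ A, x u := by
  rw [Finset.sum_congr rfl (fun u _ => by rw [mul_ite, mul_one, mul_zero]),
    Finset.sum_ite_mem, Finset.univ_inter]

lemma sum_mul_evec (x : V → ℝ) (v : V) : ∑ u, x u * evec D v u = fval D x v := by
  unfold evec fval
  rw [Finset.sum_congr rfl (fun u _ => mul_sub (x u) _ _), Finset.sum_sub_distrib,
    sum_mul_ind, sum_mul_ind]

lemma Fv_zero (v : V) {r : V → ℕ} (h : ∀ u, r u = 0) : Fv D v r = 0 := by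
  unfold Fv fval; simp [h]

/-! ### skew-symmetry: the self-payoff is zero -/

lemma sum_mul_fval (x : V → ℝ) : ∑ w, x w * fval D x w = 0 := by
  unfold fval outN inN
  have key : ∑ w, x w * ∑ u ∈ univ.filter (fun u => D.Adj w u), x u
      = ∑ w, x w * ∑ u ∈ univ.filter (fun u => D.Adj u w), x u := by
    have l : ∀ (w : V), x w * ∑ u ∈ univ.filter (fun u => D.Adj w u), x u
        = ∑ u, if D.Adj w u then x w * x u else 0 := by
      intro w
      rw [Finset.mul_sum, Finset.sum_filter]
    have r : ∀ (w : V), x w * ∑ u ∈ univ.filter (fun u => D.Adj u w), x u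
        = ∑ u, if D.Adj u w then x u * x w else 0 := by
      intro w
      rw [Finset.mul_sum, Finset.sum_filter]
      exact Finset.sum_congr rfl fun u _ => by split <;> simp [mul_comm]
    rw [Finset.sum_congr rfl fun w _ => l w, Finset.sum_congr rfl fun w _ => r w]
    exact Finset.sum_comm
  rw [Finset.sum_congr rfl fun w _ => mul_sub (x w) _ _, Finset.sum_sub_distrib, key,
    sub_self]

/-! ### recursion equations -/

lemma stratValueAux_succ (R : ReiStrategy D) (n : ℕ) (r : V → ℕ) (h : ¬ ∀ u, r u = 0) :
    D.stratValueAux R (n+1) r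
      = D.payoff (R.play r) + ∑ u, R.play r u * D.stratValueAux R n (dec r u) := by
  rw [stratValueAux, if_neg h]; rfl

lemma stratValueAux_zero (R : ReiStrategy D) (r : V → ℕ) :
    D.stratValueAux R 0 r = 0 := by rw [stratValueAux]

/-- the feasible-value set in the definition of `valueAux`. -/
def VSet (n : ℕ) (r : V → ℕ) : Set ℝ :=
  { x : ℝ | ∃ p : V → ℝ, (∀ u, 0 ≤ p u) ∧ (∑ u, p u = 1) ∧
      (∀ u, p u ≠ 0 → r u ≠ 0) ∧
      x = D.payoff p + ∑ u, p u * D.valueAux n (dec r u) }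

lemma valueAux_succ (n : ℕ) (r : V → ℕ) (h : ¬ ∀ u, r u = 0) :
    D.valueAux (n+1) r = sInf (VSet D n r) := by
  rw [valueAux, if_neg h]; rfl

lemma valueAux_zero (r : V → ℕ) : D.valueAux 0 r = 0 := by rw [valueAux]

/-- point mass -/
def delta (u₀ : V) : V → ℝ := fun w => if w = u₀ then 1 else 0

lemma delta_nonneg (u₀ u : V) : 0 ≤ delta u₀ u := by unfold delta; split <;> norm_num

lemma delta_sum (u₀ : V) : ∑ u, delta u₀ u = 1 := by
  unfold delta; rw [Finset.sum_ite_eq' univ u₀ (fun _ => (1:ℝ))]; simp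

lemma sum_delta_mul (u₀ : V) (g : V → ℝ) : ∑ u, delta u₀ u * g u = g u₀ := by
  unfold delta
  rw [Finset.sum_congr rfl (fun u _ => by rw [ite_mul, one_mul, zero_mul]),
    Finset.sum_ite_eq' univ u₀ g]
  simp

lemma mem_VSet_delta (n : ℕ) (r : V → ℕ) {u₀ : V} (h : r u₀ ≠ 0) :
    D.payoff (delta u₀) + D.valueAux n (dec r u₀) ∈ VSet D n r := by
  refine ⟨delta u₀, delta_nonneg u₀, delta_sum u₀, ?_, ?_⟩
  · intro u hu
    unfold delta at hu
    rcases eq_or_ne u u₀ with rfl | hne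
    · exact h
    · exact absurd (if_neg hne) hu
  · rw [sum_delta_mul]

lemma VSet_nonempty (n : ℕ) (r : V → ℕ) (h : ¬ ∀ u, r u = 0) :
    (VSet D n r).Nonempty := by
  obtain ⟨u₀, hu₀⟩ := not_forall.mp h
  exact ⟨_, mem_VSet_delta D n r hu₀⟩

lemma valueAux_ge (n : ℕ) (r : V → ℕ) : -(n:ℝ) ≤ D.valueAux n r := by
  induction n generalizing r with
  | zero => rw [valueAux_zero]; norm_num
  | succ n ih =>
    rw [valueAux]
    split
    · have h0 : (0:ℝ) ≤ (n:ℝ)+1 := by positivity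
      push_cast; linarith
    · next h =>
      refine le_csInf (VSet_nonempty D n r h) ?_
      rintro x ⟨p, hp0, hp1, _, rfl⟩
      have h1 : (-1:ℝ) ≤ D.payoff p := neg_one_le_payoff D hp0 hp1
      have h2 : -(n:ℝ) ≤ ∑ u, p u * D.valueAux n (fun w => r w - if w = u then 1 else 0) := by
        calc -(n:ℝ) = ∑ u, p u * (-(n:ℝ)) := by rw [← Finset.sum_mul, hp1, one_mul]
        _ ≤ _ := Finset.sum_le_sum fun u _ =>
            mul_le_mul_of_nonneg_left (ih _) (hp0 u)
      push_cast
      linarith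

lemma VSet_bddBelow (n : ℕ) (r : V → ℕ) : BddBelow (VSet D n r) := by
  refine ⟨-1 - n, ?_⟩
  rintro x ⟨p, hp0, hp1, _, rfl⟩
  have h1 : (-1:ℝ) ≤ D.payoff p := neg_one_le_payoff D hp0 hp1
  have h2 : -(n:ℝ) ≤ ∑ u, p u * D.valueAux n (dec r u) := by
    calc -(n:ℝ) = ∑ u, p u * (-(n:ℝ)) := by rw [← Finset.sum_mul, hp1, one_mul]
    _ ≤ _ := Finset.sum_le_sum fun u _ =>
        mul_le_mul_of_nonneg_left (valueAux_ge D n _) (hp0 u)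
  linarith

lemma valueAux_le_step (n : ℕ) (r : V → ℕ) (h : ¬ ∀ u, r u = 0) {p : V → ℝ}
    (hp0 : ∀ u, 0 ≤ p u) (hp1 : ∑ u, p u = 1) (hps : ∀ u, p u ≠ 0 → r u ≠ 0) :
    D.valueAux (n+1) r ≤ D.payoff p + ∑ u, p u * D.valueAux n (dec r u) := by
  rw [valueAux_succ D n r h]
  exact csInf_le (VSet_bddBelow D n r) ⟨p, hp0, hp1, hps, rfl⟩

lemma valueAux_le_norm (n : ℕ) (r : V → ℕ) (hn : ∑ u, r u = n) :
    D.valueAux n r ≤ ∑ u, (r u : ℝ) := by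
  induction n generalizing r with
  | zero =>
    rw [valueAux_zero]
    positivity
  | succ n ih =>
    have hz : ¬ ∀ u, r u = 0 := by
      intro hall
      rw [Finset.sum_eq_zero (fun u _ => hall u)] at hn
      omega
    obtain ⟨u₀, hu₀⟩ := not_forall.mp hz
    have hstep := valueAux_le_step D n r hz (delta_nonneg u₀) (delta_sum u₀)
      (fun u hu => by
        unfold delta at hu
        rcases eq_or_ne u u₀ with rfl | hne
        · exact hu₀
        · exact absurd (if_neg hne) hu)
    rw [sum_delta_mul] at hstep
    have hdec : ∑ u, dec r u₀ u = n := by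
      have := sum_dec_nat (V := V) (r := r) (u := u₀) hu₀; omega
    have h2 := ih (dec r u₀) hdec
    have h3 : ∑ u, ((dec r u₀ u : ℕ):ℝ) = (∑ u, (r u :ℝ)) - 1 := by
      rw [sum_cast_dec hu₀ univ, if_pos (Finset.mem_univ u₀)]
    have h4 : D.payoff (delta u₀) ≤ 1 := payoff_le_one D (delta_nonneg u₀) (delta_sum u₀)
    linarith

/-! ### lower bounds on strategy values -/

lemma strat_ge (R : ReiStrategy D) (v : V) :
    ∀ (n : ℕ) (r : V → ℕ), ∑ u, r u = n → Fv D v r ≤ D.stratValueAux R n r := by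
  intro n
  induction n with
  | zero =>
    intro r hn
    have hall : ∀ u, r u = 0 := by
      intro u
      have := Finset.single_le_sum (f := r) (fun i _ => Nat.zero_le _) (Finset.mem_univ u)
      omega
    rw [stratValueAux_zero, Fv_zero D v hall]
  | succ n ih =>
    intro r hn
    have hz : ¬ ∀ u, r u = 0 := by
      intro hall
      rw [Finset.sum_eq_zero (fun u _ => hall u)] at hn; omega
    rw [stratValueAux_succ D R n r hz]
    set x := R.play r with hx
    have hx0 := R.nonneg r hz
    have hx1 := R.sum_one r hz
    have hxs := R.supp r hz
    have hterm : ∀ u, x u * (Fv D v r - evec D v u) ≤ x u * D.stratValueAux R n (dec r u) := by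
      intro u
      rcases eq_or_ne (x u) 0 with h0 | h0
      · rw [h0, zero_mul, zero_mul]
      · have hru : r u ≠ 0 := hxs u h0
        have hd : ∑ w, dec r u w = n := by
          have := sum_dec_nat (V := V) (r := r) (u := u) hru; omega
        have := ih (dec r u) hd
        rw [Fv_dec D hru v] at this
        exact mul_le_mul_of_nonneg_left this (hx0 u)
    have hsum : ∑ u, x u * (Fv D v r - evec D v u)
        = Fv D v r - fval D x v := by
      rw [Finset.sum_congr rfl fun u _ => mul_sub (x u) _ _, Finset.sum_sub_distrib,
        ← Finset.sum_mul, hx1, one_mul, sum_mul_evec]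
    have h1 : fval D x v ≤ D.payoff x := fval_le_payoff D x v
    have h2 : Fv D v r - fval D x v ≤ ∑ u, x u * D.stratValueAux R n (dec r u) :=
      hsum ▸ Finset.sum_le_sum fun u _ => hterm u
    linarith

lemma strat_ge_slack (R : ReiStrategy D) (v : V) (S : Finset V) (hS : S.Nonempty)
    (r₀ : V → ℕ) (hr₀ : ∀ u, r₀ u ≠ 0 ↔ u ∈ S) (hobl : D.IsOblivious R) :
    ∀ (n : ℕ) (r : V → ℕ), ∑ u, r u = n → (∀ u, r u ≠ 0 → u ∈ S) →
      Fv D v r + ((S.inf' hS r : ℕ) : ℝ) * (D.payoff (R.play r₀) - fval D (R.play r₀) v)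
        ≤ D.stratValueAux R n r := by
  set p₀ := R.play r₀ with hp₀
  set d := D.payoff p₀ - fval D p₀ v with hdd
  have hd0 : 0 ≤ d := by
    have := fval_le_payoff D p₀ v; rw [hdd]; linarith
  intro n
  induction n with
  | zero =>
    intro r hn _
    have hall : ∀ u, r u = 0 := by
      intro u
      have := Finset.single_le_sum (f := r) (fun i _ => Nat.zero_le _) (Finset.mem_univ u)
      omega
    have hinf : S.inf' hS r = 0 := by
      obtain ⟨u, hu⟩ := hS
      have := Finset.inf'_le r hu
      have h0 := hall u
      omega
    rw [stratValueAux_zero, Fv_zero D v hall, hinf]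
    norm_num
  | succ n ih =>
    intro r hn hsub
    set k := S.inf' hS r with hk
    rcases Nat.eq_zero_or_pos k with hk0 | hk1
    · rw [hk0]
      have := strat_ge D R v (n+1) r hn
      norm_num
      linarith
    · -- interior: support is exactly S
      have hge : ∀ u ∈ S, k ≤ r u := fun u hu => Finset.inf'_le r hu
      have hsupp : ∀ u, r u ≠ 0 ↔ u ∈ S := by
        intro u
        constructor
        · exact hsub u
        · intro hu; have := hge u hu; omega
      have hz : ¬ ∀ u, r u = 0 := by
        obtain ⟨u, hu⟩ := hS
        intro hall
        exact (hsupp u).mpr hu (hall u)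
      have hplay : R.play r = p₀ :=
        hobl r r₀ (fun u => (hsupp u).trans (hr₀ u).symm)
      rw [stratValueAux_succ D R n r hz, hplay]
      have hp0 : ∀ u, 0 ≤ p₀ u := by rw [← hplay]; exact R.nonneg r hz
      have hp1 : ∑ u, p₀ u = 1 := by rw [← hplay]; exact R.sum_one r hz
      have hps : ∀ u, p₀ u ≠ 0 → r u ≠ 0 := by rw [← hplay]; exact R.supp r hz
      have hterm : ∀ u, p₀ u * ((Fv D v r - evec D v u) + ((k:ℝ) - 1) * d)
          ≤ p₀ u * D.stratValueAux R n (dec r u) := by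
        intro u
        rcases eq_or_ne (p₀ u) 0 with h0 | h0
        · rw [h0, zero_mul, zero_mul]
        · have hru : r u ≠ 0 := hps u h0
          have hd : ∑ w, dec r u w = n := by
            have := sum_dec_nat (V := V) (r := r) (u := u) hru; omega
          have hsub' : ∀ w, dec r u w ≠ 0 → w ∈ S := by
            intro w hw
            apply hsub w
            unfold dec at hw; omega
          have hinf' : k - 1 ≤ S.inf' hS (dec r u) := by
            refine Finset.le_inf' hS _ fun w hw => ?_
            have := hge w hw
            unfold dec; split <;> omega
          have hcast : ((k:ℝ) - 1) ≤ ((S.inf' hS (dec r u) : ℕ) : ℝ) := by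
            have h1 : ((k - 1 : ℕ) : ℝ) ≤ ((S.inf' hS (dec r u) : ℕ) : ℝ) :=
              Nat.cast_le.mpr hinf'
            rw [Nat.cast_sub hk1] at h1
            exact_mod_cast h1
          have hih := ih (dec r u) hd hsub'
          rw [Fv_dec D hru v] at hih
          refine mul_le_mul_of_nonneg_left (le_trans ?_ hih) (hp0 u)
          have := mul_le_mul_of_nonneg_right hcast hd0
          linarith
      have hsum : ∑ u, p₀ u * ((Fv D v r - evec D v u) + ((k:ℝ) - 1) * d)
          = Fv D v r - fval D p₀ v + ((k:ℝ) - 1) * d := by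
        have e : ∀ u, p₀ u * ((Fv D v r - evec D v u) + ((k:ℝ)-1)*d)
            = p₀ u * (Fv D v r + ((k:ℝ)-1)*d) - p₀ u * evec D v u := fun u => by ring
        rw [Finset.sum_congr rfl fun u _ => e u, Finset.sum_sub_distrib, ← Finset.sum_mul,
          hp1, one_mul, sum_mul_evec]
        ring
      have h2 : Fv D v r - fval D p₀ v + ((k:ℝ)-1) * d
          ≤ ∑ u, p₀ u * D.stratValueAux R n (dec r u) :=
        hsum ▸ Finset.sum_le_sum fun u _ => hterm u
      have h3 : D.payoff p₀ = fval D p₀ v + d := by rw [hdd]; ring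
      linarith

/-! ### the quadratic potential and the upper bound on the game value -/

/-- ℓ¹ norm of a restriction vector -/
def nr (r : V → ℕ) : ℝ := ∑ u, (r u : ℝ)

/-- centered coordinate -/
def zc (β : V → ℝ) (r : V → ℕ) (w : V) : ℝ := (r w : ℝ) - β w * nr r

/-- quadratic deviation -/
def Qf (β : V → ℝ) (r : V → ℕ) : ℝ := ∑ w, (zc β r w)^2

noncomputable def Phi (β : V → ℝ) (βm L : ℝ) (r : V → ℕ) : ℝ :=
  (Qf β r + nr r + L^2) / (2*L*βm)

noncomputable def Wf (β : V → ℝ) (α βm L : ℝ) (r : V → ℕ) : ℝ :=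
  α * nr r + (1-α) * Phi β βm L r

lemma nr_nonneg (r : V → ℕ) : 0 ≤ nr r :=
  Finset.sum_nonneg fun u _ => Nat.cast_nonneg _

lemma nr_dec {r : V → ℕ} {u : V} (h : r u ≠ 0) : nr (dec r u) = nr r - 1 := by
  unfold nr
  rw [sum_cast_dec h univ, if_pos (Finset.mem_univ u)]

lemma Qf_dec (β : V → ℝ) (hβ1 : ∑ u, β u = 1) {r : V → ℕ} {u : V} (h : r u ≠ 0) :
    Qf β (dec r u) = Qf β r + (∑ w, (2 * zc β r w * β w + (β w)^2))
      + 1 - 2 * (zc β r u + β u) := by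
  have hterm : ∀ w, (zc β (dec r u) w)^2
      = ((zc β r w + β w)^2) - (if w = u then 2*(zc β r w + β w) - 1 else 0) := by
    intro w
    unfold zc
    rw [cast_dec h w, nr_dec h]
    rcases eq_or_ne w u with rfl | hw
    · rw [if_pos rfl, if_pos rfl]; ring
    · rw [if_neg hw, if_neg hw]; ring
  unfold Qf
  rw [Finset.sum_congr rfl fun w _ => hterm w, Finset.sum_sub_distrib,
    Finset.sum_ite_eq' univ u (fun w => 2*(zc β r w + β w) - 1), if_pos (Finset.mem_univ u)]
  have : ∀ w, (zc β r w + β w)^2 = (zc β r w)^2 + (2 * zc β r w * β w + (β w)^2) :=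
    fun w => by ring
  rw [Finset.sum_congr rfl fun w _ => this w, Finset.sum_add_distrib]
  ring

section Upper

variable (S : Finset V) (hS : S.Nonempty) (β : V → ℝ) (α βm L : ℝ)
variable (hβ0 : ∀ u, 0 ≤ β u) (hβs : ∀ u, β u ≠ 0 ↔ u ∈ S) (hβ1 : ∑ u, β u = 1)
variable (hpayβ : D.payoff β ≤ α) (hα0 : 0 ≤ α) (hα1 : α ≤ 1)
variable (hβm0 : 0 < βm) (hβmle : ∀ u ∈ S, βm ≤ β u) (hL : 0 < L)

include hS hβ0 hβs hβ1 hpayβ hα0 hα1 hβm0 hβmle hL in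
lemma value_le_W :
    ∀ (n : ℕ) (r : V → ℕ), ∑ u, r u = n → (∀ u, r u ≠ 0 → u ∈ S) →
      D.valueAux n r ≤ Wf β α βm L r := by
  have hden : 0 < 2*L*βm := by positivity
  -- boundary estimate : if some coordinate of S vanishes then nr r ≤ Wf r
  have hbdry : ∀ r : V → ℕ, (∃ u₀ ∈ S, r u₀ = 0) → nr r ≤ Wf β α βm L r := by
    intro r ⟨u₀, hu₀S, hu₀⟩
    have hz : zc β r u₀ = -(β u₀ * nr r) := by
      unfold zc; rw [hu₀]; simp
    have hQ : (βm * nr r)^2 ≤ Qf β r := by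
      have h1 : (βm * nr r)^2 ≤ (β u₀ * nr r)^2 := by
        have := hβmle u₀ hu₀S
        have h2 : βm * nr r ≤ β u₀ * nr r :=
          mul_le_mul_of_nonneg_right this (nr_nonneg r)
        have h3 : 0 ≤ βm * nr r := mul_nonneg hβm0.le (nr_nonneg r)
        nlinarith
      calc (βm * nr r)^2 ≤ (β u₀ * nr r)^2 := h1
      _ = (zc β r u₀)^2 := by rw [hz]; ring
      _ ≤ Qf β r := Finset.single_le_sum (f := fun w => (zc β r w)^2)
            (fun w _ => sq_nonneg _) (Finset.mem_univ u₀)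
    have hAM : 2 * (βm * nr r) * L ≤ (βm * nr r)^2 + L^2 := two_mul_le_add_sq _ _
    have hPhi : nr r ≤ Phi β βm L r := by
      rw [Phi, le_div_iff₀ hden]
      have := nr_nonneg r
      nlinarith
    have : nr r = α * nr r + (1-α) * nr r := by ring
    rw [this, Wf]
    have h1α : 0 ≤ 1 - α := by linarith
    have := mul_le_mul_of_nonneg_left hPhi h1α
    linarith
  intro n
  induction n with
  | zero =>
    intro r hn _
    have hall : ∀ u, r u = 0 := by
      intro u
      have := Finset.single_le_sum (f := r) (fun i _ => Nat.zero_le _) (Finset.mem_univ u)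
      omega
    have h0 : nr r = 0 := by
      unfold nr
      rw [Finset.sum_eq_zero fun u _ => by rw [hall u, Nat.cast_zero]]
    rw [valueAux_zero]
    obtain ⟨u₀, hu₀⟩ := hS
    have hb := hbdry r ⟨u₀, hu₀, hall _⟩
    linarith [h0 ▸ hb]
  | succ n ih =>
    intro r hn hsub
    by_cases hin : ∀ u ∈ S, r u ≠ 0
    · -- interior step with play β
      have hz : ¬ ∀ u, r u = 0 := by
        intro hall
        rw [Finset.sum_eq_zero (fun u _ => hall u)] at hn; omega
      have hβsupp : ∀ u, β u ≠ 0 → r u ≠ 0 := fun u hu => hin u ((hβs u).mp hu)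
      have hstep := valueAux_le_step D n r hz hβ0 hβ1 hβsupp
      -- per-term bound by W of decremented vectors
      have hterm : ∀ u, β u * D.valueAux n (dec r u) ≤ β u * Wf β α βm L (dec r u) := by
        intro u
        rcases eq_or_ne (β u) 0 with h0 | h0
        · rw [h0, zero_mul, zero_mul]
        · have hru : r u ≠ 0 := hβsupp u h0
          have hd : ∑ w, dec r u w = n := by
            have := sum_dec_nat (V := V) (r := r) (u := u) hru; omega
          have hsub' : ∀ w, dec r u w ≠ 0 → w ∈ S := by
            intro w hw
            apply hsub w
            unfold dec at hw; omega
          exact mul_le_mul_of_nonneg_left (ih (dec r u) hd hsub') (hβ0 u)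
      -- the β-average of W of decremented vectors
      have hWsum : ∑ u, β u * Wf β α βm L (dec r u) ≤ Wf β α βm L r - α := by
        have hnrd : ∀ u, β u * nr (dec r u) = β u * (nr r - 1) := by
          intro u
          rcases eq_or_ne (β u) 0 with h0 | h0
          · rw [h0, zero_mul, zero_mul]
          · rw [nr_dec (hβsupp u h0)]
        have hQd : ∀ u, β u * Qf β (dec r u)
            = β u * (Qf β r + (∑ w, (2 * zc β r w * β w + (β w)^2))
                + 1 - 2 * (zc β r u + β u)) := by
          intro u
          rcases eq_or_ne (β u) 0 with h0 | h0
          · rw [h0, zero_mul, zero_mul]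
          · rw [Qf_dec β hβ1 (hβsupp u h0)]
        have hc : ∑ w, (2 * zc β r w * β w + (β w)^2)
            = 2 * (∑ w, zc β r w * β w) + ∑ w, (β w)^2 := by
          rw [Finset.sum_add_distrib, Finset.mul_sum]
          congr 1
          exact Finset.sum_congr rfl fun w _ => by ring
        have hQsum : ∑ u, β u * Qf β (dec r u) ≤ Qf β r + 1 := by
          rw [Finset.sum_congr rfl fun u _ => hQd u]
          have expand : ∀ u, β u * (Qf β r + (∑ w, (2 * zc β r w * β w + (β w)^2))
                + 1 - 2 * (zc β r u + β u))
              = β u * (Qf β r + (∑ w, (2 * zc β r w * β w + (β w)^2)) + 1)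
                - 2 * (zc β r u * β u) - 2 * (β u)^2 := fun u => by ring
          rw [Finset.sum_congr rfl fun u _ => expand u]
          rw [Finset.sum_sub_distrib, Finset.sum_sub_distrib, ← Finset.sum_mul,
            hβ1, one_mul, ← Finset.mul_sum, ← Finset.mul_sum, hc]
          have h1 : 0 ≤ ∑ w, (β w)^2 := Finset.sum_nonneg fun w _ => sq_nonneg _
          linarith
        have hPhisum : ∑ u, β u * Phi β βm L (dec r u) ≤ Phi β βm L r := by
          have : ∀ u, β u * Phi β βm L (dec r u)
              = (β u * (Qf β (dec r u)) + β u * (nr (dec r u)) + β u * L^2) / (2*L*βm) := by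
            intro u
            rw [Phi]
            field_simp
          rw [Finset.sum_congr rfl fun u _ => this u, ← Finset.sum_div]
          rw [Phi, div_le_div_iff₀ hden hden]
          have e1 : ∑ u, (β u * (Qf β (dec r u)) + β u * (nr (dec r u)) + β u * L^2)
              = (∑ u, β u * Qf β (dec r u)) + (∑ u, β u * nr (dec r u))
                + (∑ u, β u * L^2) := by
            rw [← Finset.sum_add_distrib, ← Finset.sum_add_distrib]
          have e2 : ∑ u, β u * nr (dec r u) = nr r - 1 := by
            rw [Finset.sum_congr rfl fun u _ => hnrd u, ← Finset.sum_mul, hβ1, one_mul]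
          have e3 : ∑ u, β u * L^2 = L^2 := by rw [← Finset.sum_mul, hβ1, one_mul]
          rw [e1, e2, e3]
          nlinarith [hQsum]
        -- assemble W
        have hWd : ∀ u, β u * Wf β α βm L (dec r u)
            = α * (β u * nr (dec r u)) + (1-α) * (β u * Phi β βm L (dec r u)) := by
          intro u; rw [Wf]; ring
        rw [Finset.sum_congr rfl fun u _ => hWd u, Finset.sum_add_distrib,
          ← Finset.mul_sum, ← Finset.mul_sum]
        have e2 : ∑ u, β u * nr (dec r u) = nr r - 1 := by
          rw [Finset.sum_congr rfl fun u _ => hnrd u, ← Finset.sum_mul, hβ1, one_mul]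
        rw [e2, Wf]
        have h1α : 0 ≤ 1 - α := by linarith
        have := mul_le_mul_of_nonneg_left hPhisum h1α
        nlinarith
      have hsum2 : ∑ u, β u * D.valueAux n (dec r u) ≤ Wf β α βm L r - α :=
        le_trans (Finset.sum_le_sum fun u _ => hterm u) hWsum
      calc D.valueAux (n+1) r ≤ D.payoff β + ∑ u, β u * D.valueAux n (dec r u) := hstep
      _ ≤ α + (Wf β α βm L r - α) := add_le_add hpayβ hsum2
      _ = Wf β α βm L r := by ring
    · -- boundary
      push_neg at hin
      obtain ⟨u₀, hu₀S, hu₀⟩ := hin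
      have h1 := valueAux_le_norm D (n+1) r hn
      have h2 := hbdry r ⟨u₀, hu₀S, of_not_not (by simpa using hu₀)⟩
      have : ∑ u, (r u : ℝ) = nr r := rfl
      linarith [this ▸ h1]

end Upper


end SRAux

set_option maxHeartbeats 1600000 in
theorem oblivious_strategy_achieves_max {V : Type} [Fintype V] [DecidableEq V] [Nonempty V]
    (D : Digraph' V) (R : ReiStrategy D) (hopt : D.IsOptimal R) (hobl : D.IsOblivious R)
    (S : Finset V) (hS : S.Nonempty)
    (r : V → ℕ) (hr : ∀ u, r u ≠ 0 ↔ u ∈ S)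
    (v : V) (hv : v ∈ S)
    (q : V → ℝ) (hq0 : ∀ u, 0 ≤ q u) (hqs : ∀ u, q u ≠ 0 ↔ u ∈ S)
    (hqmax : (∑ u ∈ D.outN v, q u) - ∑ u ∈ D.inN v, q u = D.payoff q) :
    (∑ u ∈ D.outN v, R.play r u) - ∑ u ∈ D.inN v, R.play r u = D.payoff (R.play r) := by
  classical
  show SRAux.fval D (R.play r) v = D.payoff (R.play r)
  set p := R.play r with hp
  set d := D.payoff p - SRAux.fval D p v with hd
  have hd0 : 0 ≤ d := by
    have := SRAux.fval_le_payoff D p v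
    rw [hd]; linarith
  -- normalize q
  have hT0 : 0 < ∑ u, q u := by
    have h1 : q v ≤ ∑ u, q u :=
      Finset.single_le_sum (fun i _ => hq0 i) (Finset.mem_univ v)
    have h2 : q v ≠ 0 := (hqs v).mpr hv
    have h3 := hq0 v
    exact lt_of_lt_of_le (lt_of_le_of_ne h3 (Ne.symm h2)) h1
  set T := ∑ u, q u with hT
  set β : V → ℝ := fun u => q u / T with hβ
  have hβu : ∀ u, β u = q u / T := fun u => rfl
  have hβ0 : ∀ u, 0 ≤ β u := fun u => div_nonneg (hq0 u) hT0.le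
  have hβs : ∀ u, β u ≠ 0 ↔ u ∈ S := by
    intro u
    rw [hβu, div_ne_zero_iff]
    constructor
    · rintro ⟨h, _⟩; exact (hqs u).mp h
    · intro h; exact ⟨(hqs u).mpr h, ne_of_gt hT0⟩
  have hβ1 : ∑ u, β u = 1 := by
    rw [Finset.sum_congr rfl fun u _ => hβu u, ← Finset.sum_div, ← hT]
    exact div_self (ne_of_gt hT0)
  have hfvalβ : ∀ w, SRAux.fval D β w = SRAux.fval D q w / T := by
    intro w
    unfold SRAux.fval
    rw [Finset.sum_congr rfl fun u _ => hβu u, Finset.sum_congr rfl fun u _ => hβu u,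
      ← Finset.sum_div, ← Finset.sum_div, sub_div]
  set α := SRAux.fval D β v with hα
  have hαmax : ∀ w, SRAux.fval D β w ≤ α := by
    intro w
    have h1 : SRAux.fval D q w ≤ D.payoff q := SRAux.fval_le_payoff D q w
    have h2 : SRAux.fval D q v = D.payoff q := hqmax
    rw [hα, hfvalβ w, hfvalβ v]
    exact div_le_div_of_nonneg_right (le_of_le_of_eq h1 h2.symm) hT0.le
  have hpayβ : D.payoff β ≤ α := SRAux.payoff_le D hαmax
  have hα1 : α ≤ 1 := hα ▸ SRAux.fval_le_one D hβ0 hβ1 v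
  have hα0 : 0 ≤ α := by
    have h0 := SRAux.sum_mul_fval D β
    have h1 : ∑ w, β w * SRAux.fval D β w ≤ ∑ w, β w * α :=
      Finset.sum_le_sum fun w _ => mul_le_mul_of_nonneg_left (hαmax w) (hβ0 w)
    rw [h0, ← Finset.sum_mul, hβ1, one_mul] at h1
    exact h1
  have hβle1 : ∀ u, β u ≤ 1 := by
    intro u
    have h1 := Finset.single_le_sum (f := β) (fun w _ => hβ0 w) (Finset.mem_univ u)
    rw [hβ1] at h1
    exact h1
  set βm := S.inf' hS β with hβmdef
  have hβmle : ∀ u ∈ S, βm ≤ β u := fun u hu => Finset.inf'_le β hu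
  have hβm0 : 0 < βm := by
    rw [hβmdef, Finset.lt_inf'_iff]
    intro u hu
    exact lt_of_le_of_ne (hβ0 u) (Ne.symm ((hβs u).mpr hu))
  set cV := (Fintype.card V : ℝ) with hcV
  have hcV1 : (1:ℝ) ≤ cV := by
    rw [hcV]; exact_mod_cast Fintype.card_pos
  set CV := cV * (1 + cV)^2 with hCV
  have hCV0 : 0 ≤ CV := by
    rw [hCV]; positivity
  set C₂ := 2*cV/βm + (CV + cV + 2)/(2*βm^2) with hC₂
  -- main quantitative estimate
  have key : ∀ K : ℕ, 1 ≤ K → d * (K:ℝ) ≤ C₂ := by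
    intro K hK
    set L : ℝ := (K:ℝ) with hLdef
    have hL1 : (1:ℝ) ≤ L := by rw [hLdef]; exact_mod_cast hK
    have hL : 0 < L := lt_of_lt_of_le one_pos hL1
    set N : ℕ := K^2 with hN
    have hNr : (N:ℝ) = L^2 := by rw [hN, hLdef]; push_cast; ring
    have hN0 : 0 < N := by rw [hN]; positivity
    set rN : V → ℕ := fun u => if u ∈ S then ⌈(N:ℝ) * β u⌉₊ else 0 with hrNdef
    have hrNu : ∀ u, rN u = if u ∈ S then ⌈(N:ℝ) * β u⌉₊ else 0 := fun u => rfl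
    have hrlow : ∀ u, (N:ℝ) * β u ≤ (rN u : ℝ) := by
      intro u
      rw [hrNu]
      by_cases hu : u ∈ S
      · rw [if_pos hu]; exact Nat.le_ceil _
      · rw [if_neg hu, Nat.cast_zero]
        have hb : β u = 0 := by
          by_contra h; exact hu ((hβs u).mp h)
        rw [hb, mul_zero]
    have hrhigh : ∀ u, (rN u : ℝ) ≤ (N:ℝ) * β u + 1 := by
      intro u
      rw [hrNu]
      by_cases hu : u ∈ S
      · rw [if_pos hu]
        exact (Nat.ceil_lt_add_one (mul_nonneg (Nat.cast_nonneg N) (hβ0 u))).le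
      · rw [if_neg hu, Nat.cast_zero]
        have := hβ0 u
        positivity
    have hrsupp : ∀ u, rN u ≠ 0 ↔ u ∈ S := by
      intro u
      rw [hrNu]
      by_cases hu : u ∈ S
      · rw [if_pos hu]
        have hpos : 0 < (N:ℝ) * β u := by
          have hb : 0 < β u :=
            lt_of_le_of_ne (hβ0 u) (Ne.symm ((hβs u).mpr hu))
          have hNpos : (0:ℝ) < (N:ℝ) := by exact_mod_cast hN0
          exact mul_pos hNpos hb
        simp only [hu, iff_true]
        exact Nat.pos_iff_ne_zero.mp (Nat.ceil_pos.mpr hpos)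
      · simp [hu]
    -- the three inequalities
    have h1 := SRAux.strat_ge_slack D R v S hS r hr hobl (∑ u, rN u) rN rfl
      (fun u hu => (hrsupp u).1 hu)
    rw [← hp, ← hd] at h1
    have h2 : D.stratValueAux R (∑ u, rN u) rN = D.valueAux (∑ u, rN u) rN := hopt rN
    have h3 := SRAux.value_le_W D S hS β α βm L hβ0 hβs hβ1 hpayβ hα0 hα1 hβm0 hβmle hL
      (∑ u, rN u) rN rfl (fun u hu => (hrsupp u).1 hu)
    -- numeric estimates
    have binf : L^2 * βm ≤ ((S.inf' hS rN : ℕ):ℝ) := by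
      obtain ⟨us, husS, heq⟩ := Finset.exists_mem_eq_inf' hS rN
      rw [heq]
      calc L^2 * βm = (N:ℝ) * βm := by rw [hNr]
      _ ≤ (N:ℝ) * β us := mul_le_mul_of_nonneg_left (hβmle us husS) (Nat.cast_nonneg N)
      _ ≤ (rN us : ℝ) := hrlow us
    have bnr_hi : SRAux.nr rN ≤ L^2 + cV := by
      unfold SRAux.nr
      calc ∑ u, (rN u:ℝ) ≤ ∑ u, ((N:ℝ) * β u + 1) := Finset.sum_le_sum fun u _ => hrhigh u
      _ = (N:ℝ) * (∑ u, β u) + (Fintype.card V : ℝ) := by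
          rw [Finset.sum_add_distrib, ← Finset.mul_sum, Finset.sum_const, Finset.card_univ,
            nsmul_eq_mul, mul_one]
      _ = L^2 + cV := by rw [hβ1, mul_one, hNr, hcV]
    have bnr_lo : L^2 ≤ SRAux.nr rN := by
      unfold SRAux.nr
      calc L^2 = (N:ℝ) * (∑ u, β u) := by rw [hβ1, mul_one, hNr]
      _ = ∑ u, (N:ℝ) * β u := by rw [Finset.mul_sum]
      _ ≤ ∑ u, (rN u:ℝ) := Finset.sum_le_sum fun u _ => hrlow u
    have bFv : L^2 * α - cV ≤ SRAux.Fv D v rN := by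
      have hout : ∑ u ∈ D.outN v, (N:ℝ) * β u ≤ ∑ u ∈ D.outN v, (rN u:ℝ) :=
        Finset.sum_le_sum fun u _ => hrlow u
      have hin : ∑ u ∈ D.inN v, (rN u:ℝ) ≤ ∑ u ∈ D.inN v, ((N:ℝ) * β u + 1) :=
        Finset.sum_le_sum fun u _ => hrhigh u
      have hin2 : ∑ u ∈ D.inN v, ((N:ℝ) * β u + 1)
          = (∑ u ∈ D.inN v, (N:ℝ) * β u) + ((D.inN v).card : ℝ) := by
        rw [Finset.sum_add_distrib, Finset.sum_const, nsmul_eq_mul, mul_one]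
      have hcard : ((D.inN v).card : ℝ) ≤ cV := by
        rw [hcV]
        exact_mod_cast Finset.card_le_univ _
      have hαexp : L^2 * α
          = (∑ u ∈ D.outN v, (N:ℝ) * β u) - ∑ u ∈ D.inN v, (N:ℝ) * β u := by
        rw [hα]
        unfold SRAux.fval
        rw [← Finset.mul_sum, ← Finset.mul_sum, hNr.symm]
        ring
      unfold SRAux.Fv SRAux.fval
      linarith
    have bQ : SRAux.Qf β rN ≤ CV := by
      have hzb : ∀ u, (SRAux.zc β rN u)^2 ≤ (1+cV)^2 := by
        intro u
        have e1 : β u * (N:ℝ) = (N:ℝ) * β u := mul_comm _ _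
        have m1 : β u * L^2 ≤ β u * SRAux.nr rN :=
          mul_le_mul_of_nonneg_left bnr_lo (hβ0 u)
        have m2 : β u * SRAux.nr rN ≤ β u * (L^2 + cV) :=
          mul_le_mul_of_nonneg_left bnr_hi (hβ0 u)
        have e2 : β u * (L^2 + cV) = β u * L^2 + β u * cV := by ring
        have m3 : β u * cV ≤ 1 * cV :=
          mul_le_mul_of_nonneg_right (hβle1 u) (by linarith)
        have h1 : SRAux.zc β rN u ≤ 1 + cV := by
          unfold SRAux.zc
          have := hrhigh u
          rw [hNr] at this e1
          linarith
        have h2 : -(1+cV) ≤ SRAux.zc β rN u := by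
          unfold SRAux.zc
          have := hrlow u
          rw [hNr] at this e1
          linarith
        exact sq_le_sq' h2 h1
      calc SRAux.Qf β rN ≤ ∑ _u : V, (1+cV)^2 :=
            Finset.sum_le_sum fun u _ => hzb u
      _ = cV * (1+cV)^2 := by
          rw [Finset.sum_const, Finset.card_univ, nsmul_eq_mul, hcV]
      _ = CV := by rw [hCV]
    -- combine
    have hden : (0:ℝ) < 2*L*βm := by positivity
    have hPhi0 : 0 ≤ SRAux.Phi β βm L rN := by
      have hQ0 : 0 ≤ SRAux.Qf β rN := Finset.sum_nonneg fun w _ => sq_nonneg _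
      have := SRAux.nr_nonneg rN
      unfold SRAux.Phi
      positivity
    have hPhiB : SRAux.Phi β βm L rN ≤ (CV + cV + 2*L^2)/(2*L*βm) := by
      unfold SRAux.Phi
      exact div_le_div_of_nonneg_right (by linarith [bQ, bnr_hi]) hden.le
    have hfinal : L^2 * βm * d ≤ 2*cV + (CV + cV + 2*L^2)/(2*L*βm) := by
      have hA : SRAux.Fv D v rN + ((S.inf' hS rN : ℕ):ℝ) * d ≤ SRAux.Wf β α βm L rN :=
        le_trans h1 (le_trans (le_of_eq h2) h3)
      have hinfd : L^2*βm*d ≤ ((S.inf' hS rN:ℕ):ℝ) * d :=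
        mul_le_mul_of_nonneg_right binf hd0
      have hαnr : α * SRAux.nr rN ≤ α * (L^2 + cV) :=
        mul_le_mul_of_nonneg_left bnr_hi hα0
      have hαcV : α * cV ≤ 1 * cV := mul_le_mul_of_nonneg_right hα1 (by linarith)
      have hWexp : SRAux.Wf β α βm L rN
          = α * SRAux.nr rN + (1-α) * SRAux.Phi β βm L rN := rfl
      have hphile : (1-α) * SRAux.Phi β βm L rN ≤ SRAux.Phi β βm L rN := by
        nlinarith [hPhi0, hα0]
      have e3 : α * (L^2 + cV) = L^2 * α + α * cV := by ring
      rw [hWexp] at hA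
      have s1 : ((S.inf' hS rN:ℕ):ℝ) * d
          ≤ α * SRAux.nr rN + (1-α) * SRAux.Phi β βm L rN - SRAux.Fv D v rN := by
        linarith only [hA]
      have s2 : α * SRAux.nr rN - SRAux.Fv D v rN ≤ 2*cV := by
        linarith only [hαnr, e3, hαcV, bFv]
      have s3 : (1-α) * SRAux.Phi β βm L rN ≤ (CV + cV + 2*L^2)/(2*L*βm) :=
        le_trans hphile hPhiB
      calc L^2 * βm * d ≤ ((S.inf' hS rN:ℕ):ℝ) * d := hinfd
      _ ≤ α * SRAux.nr rN + (1-α) * SRAux.Phi β βm L rN - SRAux.Fv D v rN := s1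
      _ = (α * SRAux.nr rN - SRAux.Fv D v rN) + (1-α) * SRAux.Phi β βm L rN := by ring
      _ ≤ 2*cV + (CV + cV + 2*L^2)/(2*L*βm) := add_le_add s2 s3
    -- clean up the divisions
    have hC₂mul : C₂ * (2*L^2*βm^2) = 4*cV*L^2*βm + (CV+cV+2)*L^2 := by
      rw [hC₂]
      field_simp
      ring
    have hdiv : (CV + cV + 2*L^2)/(2*L*βm) * (2*L*βm) = CV + cV + 2*L^2 :=
      div_mul_cancel₀ _ (ne_of_gt hden)
    have h6 : 2*L^3*βm^2*d ≤ 4*cV*L*βm + (CV + cV + 2*L^2) := by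
      have h5 := mul_le_mul_of_nonneg_right hfinal hden.le
      rw [add_mul, hdiv] at h5
      have e : (L^2*βm*d)*(2*L*βm) = 2*L^3*βm^2*d := by ring
      have e2 : 2*cV*(2*L*βm) = 4*cV*L*βm := by ring
      linarith only [h5, e, e2]
    have hLL : L ≤ L^2 := by nlinarith [hL1]
    have hL21 : (1:ℝ) ≤ L^2 := by nlinarith [hL1]
    have i1 : 4*cV*L*βm ≤ 4*cV*L^2*βm := by
      have h0 : (0:ℝ) ≤ 4*cV := by linarith
      have := mul_le_mul_of_nonneg_right
        (mul_le_mul_of_nonneg_left hLL h0) hβm0.le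
      linarith [this]
    have i2 : CV + cV ≤ (CV + cV)*L^2 := by
      have h0 : (0:ℝ) ≤ CV + cV := by linarith only [hCV0, hcV1]
      have := mul_le_mul_of_nonneg_left hL21 h0
      linarith only [this]
    have h7 : (d*L) * (2*L^2*βm^2) ≤ C₂ * (2*L^2*βm^2) := by
      rw [hC₂mul]
      have e : (d*L)*(2*L^2*βm^2) = 2*L^3*βm^2*d := by ring
      rw [e]
      have e2 : (CV+cV+2)*L^2 = (CV+cV)*L^2 + 2*L^2 := by ring
      linarith only [h6, i1, i2, e2]
    have hpos : (0:ℝ) < 2*L^2*βm^2 := by positivity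
    have := le_of_mul_le_mul_right h7 hpos
    rw [hLdef] at this
    exact this
  -- conclude d ≤ 0, hence the claim
  have hdle : d ≤ 0 := by
    by_contra hcon
    push_neg at hcon
    obtain ⟨K, hKgt⟩ := exists_nat_gt (C₂ / d)
    have hK1 : 1 ≤ K + 1 := Nat.le_add_left 1 K
    have hkey := key (K+1) hK1
    have hKC : C₂ / d < ((K+1:ℕ):ℝ) := by
      push_cast
      push_cast at hKgt
      linarith
    rw [div_lt_iff₀ hcon] at hKC
    have : d * ((K+1:ℕ):ℝ) = ((K+1:ℕ):ℝ) * d := mul_comm _ _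
    linarith
  rw [hd] at hd0 hdle
  linarith
end

section
/- Let n ≥ 16 be an integer, let E_n denote the set of Eulerian tournaments on the vertex set {1,…,2n+1}, and for distinct vertices v, w let E_n^{v,w} ⊆ E_n denote the set of Eulerian tournaments D ∈ E_n with (v,w) ∈ E(D) and |N^+(v) ∩ N^+(w)| = n−1. Then |E_n^{v,w}| ≤ 2^{14} · n^{−4} · |E_n|. -/
open Finset

/-!
Write `S_k` for the Eulerian tournaments `D` with `v → w` and `|N⁺(v) ∩ N⁺(w)| = k`. For
`a ∈ N⁺(v) ∩ N⁺(w)` and `c ∈ N⁻(v) ∩ N⁻(w)` with `a → c`, reversing the triangle `v → a → c → v`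
keeps `D` an Eulerian tournament and maps `S_{k+1}` into `S_k`. If `|V| = 2(k + 2 + d) + 1`,
counting the out-neighbours of each `a ∈ N⁺(v) ∩ N⁺(w)` shows that every `D ∈ S_{k+1}` admits at
least `(k + 1)(k + 2 - 2d) / 2` such switches, while `D' ∈ S_k` arises from at most `(d + 2)(d + 1)`
of them, because `a` and `c` are recovered in `N⁻(v) ∩ N⁺(w)` and `N⁺(v) ∩ N⁻(w)` of `D'`. Double
counting for `k = n - 2` and `k = n - 3` gives `|S_{n-1}| n (n - 1) (n - 2) (n - 3) ≤ 48 |S_{n-3}|`.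
-/

namespace Digraph'

variable {V : Type}

theorem adj_injective : Function.Injective (Adj : Digraph' V → V → V → Bool) := by
  rintro ⟨_, _, _⟩ ⟨_, _, _⟩ rfl
  rfl

theorem not_adj_of_adj {D : Digraph' V} {x y : V} (h : D.Adj x y) : ¬ D.Adj y x := by
  simp [D.asymm x y h]

theorem ne_of_adj {D : Digraph' V} {x y : V} (h : D.Adj x y) : x ≠ y := by
  rintro rfl
  simp [D.irrefl] at h

section

variable [Fintype V] {D : Digraph' V}

@[simp]
theorem mem_outN {x u : V} : u ∈ D.outN x ↔ D.Adj x u := by simp [outN]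

@[simp]
theorem mem_inN {x u : V} : u ∈ D.inN x ↔ D.Adj u x := by simp [inN]

end

variable [DecidableEq V]

def reverseTriangle (D : Digraph' V) (v a c : V) : Digraph' V where
  Adj x y := if s(x, y) ∈ ({s(v, a), s(a, c), s(c, v)} : Finset (Sym2 V)) then D.Adj y x
    else D.Adj x y
  irrefl x := by split_ifs <;> exact D.irrefl x
  asymm x y h := by
    rw [Sym2.eq_swap (a := y)]
    split_ifs at h ⊢
    · exact D.asymm y x h
    · exact D.asymm x y h

variable {D : Digraph' V} {v a c x y : V}

theorem reverseTriangle_adj :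
    (D.reverseTriangle v a c).Adj x y =
      if s(x, y) ∈ ({s(v, a), s(a, c), s(c, v)} : Finset (Sym2 V)) then D.Adj y x
      else D.Adj x y := rfl

theorem reverseTriangle_rotate : D.reverseTriangle v a c = D.reverseTriangle a c v := by
  apply adj_injective
  funext x y
  simp only [reverseTriangle_adj, Finset.mem_insert, Finset.mem_singleton]
  congr 1
  simp only [eq_iff_iff]
  tauto

theorem reverseTriangle_reverseTriangle :
    (D.reverseTriangle v a c).reverseTriangle v a c = D := by
  apply adj_injective
  funext x y
  simp only [reverseTriangle_adj, Sym2.eq_swap (a := y)]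
  split_ifs <;> rfl

theorem reverseTriangle_adj_of_ne_left (hv : x ≠ v) (ha : x ≠ a) (hc : x ≠ c) :
    (D.reverseTriangle v a c).Adj x y = D.Adj x y := by
  rw [reverseTriangle_adj, if_neg]
  simp [hv, ha, hc]

theorem reverseTriangle_adj_of_ne_right (hv : y ≠ v) (ha : y ≠ a) (hc : y ≠ c) :
    (D.reverseTriangle v a c).Adj x y = D.Adj x y := by
  rw [reverseTriangle_adj, if_neg]
  simp [hv, ha, hc]

theorem isTournament_reverseTriangle (hT : D.IsTournament) :
    (D.reverseTriangle v a c).IsTournament := by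
  intro x y hxy
  simp only [reverseTriangle_adj, Sym2.eq_swap (a := y)]
  split_ifs
  · exact (hT x y hxy).symm
  · exact hT x y hxy

variable [Fintype V] {w : V} {j k d m n : ℕ}

noncomputable instance : Fintype (Digraph' V) := Fintype.ofInjective _ adj_injective

theorem card_inter_outN_add_card_inter_inN (hT : D.IsTournament) (s : Finset V) (y : V) :
    (s ∩ D.outN y).card + (s ∩ D.inN y).card = (s.erase y).card := by
  rw [← card_union_of_disjoint]
  · congr 1
    ext u
    simp only [mem_union, mem_inter, mem_outN, mem_inN, mem_erase]
    constructor
    · rintro (⟨hu, h⟩ | ⟨hu, h⟩)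
      exacts [⟨(ne_of_adj h).symm, hu⟩, ⟨ne_of_adj h, hu⟩]
    · rintro ⟨huy, hu⟩
      exact (hT y u huy.symm).imp (⟨hu, ·⟩) (⟨hu, ·⟩)
  · exact disjoint_left.2 fun u hu hu' =>
      not_adj_of_adj (mem_outN.1 (mem_inter.1 hu).2) (mem_inN.1 (mem_inter.1 hu').2)

theorem card_outN_add_card_inN (hT : D.IsTournament) (x : V) :
    (D.outN x).card + (D.inN x).card + 1 = Fintype.card V := by
  have h := card_inter_outN_add_card_inter_inN hT univ x
  rw [univ_inter, univ_inter, card_erase_of_mem (mem_univ x), card_univ] at h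
  have := Fintype.card_pos_iff.2 ⟨x⟩
  omega

theorem isEulerian_iff (hT : D.IsTournament) :
    D.IsEulerian ↔ ∀ x, 2 * (D.outN x).card + 1 = Fintype.card V := by
  refine forall_congr' fun x => ?_
  have := card_outN_add_card_inN hT x
  omega

theorem card_outN_of_isEulerian {n : ℕ} (hT : D.IsTournament) (hE : D.IsEulerian)
    (hV : Fintype.card V = 2 * n + 1) (x : V) : (D.outN x).card = n := by
  have := (isEulerian_iff hT).1 hE x
  omega

theorem two_mul_sum_card_inter_outN (hT : D.IsTournament) (s : Finset V) :
    2 * ∑ a ∈ s, (s ∩ D.outN a).card = s.card * (s.card - 1) := by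
  have hin : ∑ a ∈ s, (s ∩ D.inN a).card = ∑ a ∈ s, (s ∩ D.outN a).card := by
    simp only [inter_comm s, outN, inN, filter_inter, card_filter, univ_inter]
    exact sum_comm
  calc 2 * ∑ a ∈ s, (s ∩ D.outN a).card
      = ∑ a ∈ s, ((s ∩ D.outN a).card + (s ∩ D.inN a).card) := by
        rw [sum_add_distrib, hin, two_mul]
    _ = ∑ a ∈ s, (s.card - 1) := sum_congr rfl fun a ha => by
        rw [card_inter_outN_add_card_inter_inN hT, card_erase_of_mem ha]
    _ = s.card * (s.card - 1) := by rw [sum_const, smul_eq_mul]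

theorem outN_reverseTriangle_self (hva : D.Adj v a) (hcv : D.Adj c v) :
    (D.reverseTriangle v a c).outN v = insert c ((D.outN v).erase a) := by
  ext u
  by_cases hua : u = a
  · subst hua
    have hac : u ≠ c := by rintro rfl; exact not_adj_of_adj hva hcv
    simp [reverseTriangle_adj, not_adj_of_adj hva, hac]
  by_cases huc : u = c
  · subst huc
    simp [reverseTriangle_adj, hcv]
  simp [reverseTriangle_adj, hua, huc, ne_of_adj hva, (ne_of_adj hcv).symm]

theorem card_outN_reverseTriangle_self (hva : D.Adj v a) (hcv : D.Adj c v) :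
    ((D.reverseTriangle v a c).outN v).card = (D.outN v).card := by
  rw [outN_reverseTriangle_self hva hcv, card_insert_of_notMem (by simp [not_adj_of_adj hcv]),
    card_erase_add_one (mem_outN.2 hva)]

theorem card_outN_reverseTriangle (hva : D.Adj v a) (hac : D.Adj a c) (hcv : D.Adj c v)
    (x : V) : ((D.reverseTriangle v a c).outN x).card = (D.outN x).card := by
  by_cases hxv : x = v
  · subst hxv
    exact card_outN_reverseTriangle_self hva hcv
  by_cases hxa : x = a
  · subst hxa
    rw [reverseTriangle_rotate]
    exact card_outN_reverseTriangle_self hac hva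
  by_cases hxc : x = c
  · subst hxc
    rw [reverseTriangle_rotate, reverseTriangle_rotate]
    exact card_outN_reverseTriangle_self hcv hac
  congr 1
  ext u
  simp [reverseTriangle_adj_of_ne_left hxv hxa hxc]

theorem isEulerian_reverseTriangle (hT : D.IsTournament) (hE : D.IsEulerian)
    (hva : D.Adj v a) (hac : D.Adj a c) (hcv : D.Adj c v) :
    (D.reverseTriangle v a c).IsEulerian := by
  rw [isEulerian_iff (isTournament_reverseTriangle hT)]
  intro x
  rw [card_outN_reverseTriangle hva hac hcv]
  exact (isEulerian_iff hT).1 hE x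

open scoped Classical in
noncomputable def eulerianCommonOut (v w : V) (k : ℕ) : Finset (Digraph' V) :=
  univ.filter fun D =>
    D.IsTournament ∧ D.IsEulerian ∧ D.Adj v w ∧ (D.outN v ∩ D.outN w).card = k

theorem mem_eulerianCommonOut : D ∈ eulerianCommonOut v w k ↔
    D.IsTournament ∧ D.IsEulerian ∧ D.Adj v w ∧ (D.outN v ∩ D.outN w).card = k := by
  simp [eulerianCommonOut]

theorem card_outN_inter_inN_of_mem_eulerianCommonOut (hV : Fintype.card V = 2 * n + 1)
    (hD : D ∈ eulerianCommonOut v w j) :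
    (D.outN v ∩ D.inN w).card + j + 1 = n ∧ (D.inN v ∩ D.outN w).card + j = n := by
  obtain ⟨hT, hE, hvw, hj⟩ := mem_eulerianCommonOut.1 hD
  have hv := card_inter_outN_add_card_inter_inN hT (D.outN v) w
  have hw := card_inter_outN_add_card_inter_inN hT (D.outN w) v
  rw [erase_eq_of_notMem (by simpa using not_adj_of_adj hvw), inter_comm,
    inter_comm (D.outN w)] at hw
  have := card_erase_add_one (mem_outN.2 hvw)
  have := card_outN_of_isEulerian hT hE hV v
  have := card_outN_of_isEulerian hT hE hV w
  omega

theorem card_outN_le_of_adj (hT : D.IsTournament) {a : V} (hva : D.Adj v a) (hwa : D.Adj w a) :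
    (D.outN a).card ≤ (D.outN v ∩ D.outN w ∩ D.outN a).card + (D.outN v ∩ D.inN w).card +
      (D.inN v ∩ D.outN w).card + (D.inN v ∩ D.inN w ∩ D.outN a).card := by
  set I := D.outN v ∩ D.outN w ∩ D.outN a
  set X := D.outN v ∩ D.inN w
  set Z := D.inN v ∩ D.outN w
  set C := D.inN v ∩ D.inN w ∩ D.outN a
  have h1 := card_union_le (I ∪ X ∪ Z) C
  have h2 := card_union_le (I ∪ X) Z
  have h3 := card_union_le I X
  suffices D.outN a ⊆ I ∪ X ∪ Z ∪ C by have := card_le_card this; omega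
  intro u hu
  have hu' := mem_outN.1 hu
  have huv : u ≠ v := fun h => not_adj_of_adj hva (h ▸ hu')
  have huw : u ≠ w := fun h => not_adj_of_adj hwa (h ▸ hu')
  simp only [I, X, Z, C, mem_union, mem_inter, mem_outN, mem_inN, hu', and_true]
  rcases hT v u huv.symm with hv | hv <;> rcases hT w u huw.symm with hw | hw <;> simp [hv, hw]

def switches (D : Digraph' V) (v w : V) : Finset (V × V) :=
  ((D.outN v ∩ D.outN w) ×ˢ (D.inN v ∩ D.inN w)).filter fun p => D.Adj p.1 p.2

theorem mem_switches {p : V × V} : p ∈ D.switches v w ↔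
    (D.Adj v p.1 ∧ D.Adj w p.1) ∧ (D.Adj p.2 v ∧ D.Adj p.2 w) ∧ D.Adj p.1 p.2 := by
  simp [switches, and_assoc]

theorem card_switches : (D.switches v w).card =
    ∑ a ∈ D.outN v ∩ D.outN w, (D.inN v ∩ D.inN w ∩ D.outN a).card := by
  rw [switches, card_filter, sum_product]
  refine sum_congr rfl fun a _ => ?_
  rw [← card_filter]
  congr 1
  ext c
  simp [and_assoc]

theorem le_card_switches (hV : Fintype.card V = 2 * (k + 2 + d) + 1)
    (hD : D ∈ eulerianCommonOut v w (k + 1)) :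
    ((k + 1) * (k + 2 - 2 * d) / 2 : ℝ) ≤ (D.switches v w).card := by
  obtain ⟨hT, hE, -, hI⟩ := mem_eulerianCommonOut.1 hD
  obtain ⟨hX, hZ⟩ := card_outN_inter_inN_of_mem_eulerianCommonOut hV hD
  have hdeg := card_outN_of_isEulerian hT hE hV
  have hsum : ∑ a ∈ D.outN v ∩ D.outN w, (k + 2 + d) ≤
      ∑ a ∈ D.outN v ∩ D.outN w, ((D.outN v ∩ D.outN w ∩ D.outN a).card + d + (d + 1) +
        (D.inN v ∩ D.inN w ∩ D.outN a).card) := by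
    refine sum_le_sum fun a ha => ?_
    obtain ⟨hva, hwa⟩ := mem_inter.1 ha
    have := card_outN_le_of_adj hT (mem_outN.1 hva) (mem_outN.1 hwa)
    have := hdeg a
    omega
  have hinside := two_mul_sum_card_inter_outN hT (D.outN v ∩ D.outN w)
  simp only [sum_add_distrib, sum_const, smul_eq_mul, hI, Nat.add_sub_cancel,
    ← card_switches] at hsum hinside
  rify at hsum hinside
  linarith

theorem reverseTriangle_mem_eulerianCommonOut (hvw : v ≠ w)
    (hD : D ∈ eulerianCommonOut v w (k + 1)) {p : V × V} (hp : p ∈ D.switches v w) :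
    D.reverseTriangle v p.1 p.2 ∈ eulerianCommonOut v w k := by
  obtain ⟨hT, hE, hvw', hI⟩ := mem_eulerianCommonOut.1 hD
  obtain ⟨⟨hva, hwa⟩, ⟨hcv, hcw⟩, hac⟩ := mem_switches.1 hp
  have hwa' := ne_of_adj hwa
  have hwc := (ne_of_adj hcw).symm
  have hw : (D.reverseTriangle v p.1 p.2).outN w = D.outN w := by
    ext u
    simp [reverseTriangle_adj_of_ne_left hvw.symm hwa' hwc]
  refine mem_eulerianCommonOut.2 ⟨isTournament_reverseTriangle hT,
    isEulerian_reverseTriangle hT hE hva hac hcv, ?_, ?_⟩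
  · rwa [reverseTriangle_adj_of_ne_right hvw.symm hwa' hwc]
  · rw [outN_reverseTriangle_self hva hcv, hw,
      insert_inter_of_notMem (by simpa using not_adj_of_adj hcw), erase_inter,
      card_erase_of_mem (mem_inter.2 ⟨mem_outN.2 hva, mem_outN.2 hwa⟩), hI, Nat.add_sub_cancel]

theorem reverseTriangle_injOn :
    Set.InjOn (fun p : V × V => D.reverseTriangle v p.1 p.2) {p | D.Adj v p.1 ∧ D.Adj p.2 v} := by
  rintro ⟨a, c⟩ ⟨hva, hcv⟩ ⟨a', c'⟩ ⟨hva', hcv'⟩ h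
  have hout := congrArg (outN · v) h
  simp only [outN_reverseTriangle_self hva hcv, outN_reverseTriangle_self hva' hcv'] at hout
  have ha := mem_outN.2 hva
  have ha' := mem_outN.2 hva'
  have hc : c ∉ D.outN v := by simpa using not_adj_of_adj hcv
  have hc' : c' ∉ D.outN v := by simpa using not_adj_of_adj hcv'
  simp only [Finset.ext_iff, mem_insert, mem_erase] at hout
  grind

theorem mem_product_of_mem_switches (hvw : v ≠ w) {p : V × V} (hp : p ∈ D.switches v w) :
    p ∈ ((D.reverseTriangle v p.1 p.2).inN v ∩ (D.reverseTriangle v p.1 p.2).outN w) ×ˢ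
      ((D.reverseTriangle v p.1 p.2).outN v ∩ (D.reverseTriangle v p.1 p.2).inN w) := by
  obtain ⟨⟨hva, hwa⟩, ⟨hcv, hcw⟩, -⟩ := mem_switches.1 hp
  have hwa' := ne_of_adj hwa
  have hwc := (ne_of_adj hcw).symm
  simp [reverseTriangle_adj_of_ne_left hvw.symm hwa' hwc,
    reverseTriangle_adj_of_ne_right hvw.symm hwa' hwc, reverseTriangle_adj, hva, hwa, hcv, hcw]

theorem card_eulerianCommonOut_succ_mul_le (hV : Fintype.card V = 2 * (k + 2 + d) + 1)
    (hvw : v ≠ w) :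
    ((eulerianCommonOut v w (k + 1)).card : ℝ) * ((k + 1) * (k + 2 - 2 * d) / 2) ≤
      (eulerianCommonOut v w k).card * ((d + 2) * (d + 1)) := by
  classical
  let IsSwitch (D D' : Digraph' V) : Prop :=
    ∃ p ∈ D.switches v w, D' = D.reverseTriangle v p.1 p.2
  have key := card_nsmul_le_card_nsmul IsSwitch (s := eulerianCommonOut v w (k + 1))
    (t := eulerianCommonOut v w k) (m := ((k + 1) * (k + 2 - 2 * d) / 2 : ℝ))
    (n := ((d + 2) * (d + 1) : ℝ)) ?_ ?_
  · simpa only [nsmul_eq_mul] using key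
  · intro D hD
    have hinj : Set.InjOn (fun p : V × V => D.reverseTriangle v p.1 p.2) (D.switches v w) :=
      reverseTriangle_injOn.mono fun _ hp =>
        show _ ∧ _ from ⟨(mem_switches.1 hp).1.1, (mem_switches.1 hp).2.1.1⟩
    have hsub : (D.switches v w).image (fun p => D.reverseTriangle v p.1 p.2) ⊆
        (eulerianCommonOut v w k).bipartiteAbove IsSwitch D := by
      simp only [subset_iff, mem_image, mem_bipartiteAbove]
      rintro _ ⟨p, hp, rfl⟩
      exact ⟨reverseTriangle_mem_eulerianCommonOut hvw hD hp, p, hp, rfl⟩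
    calc ((k + 1) * (k + 2 - 2 * d) / 2 : ℝ) ≤ (D.switches v w).card := le_card_switches hV hD
      _ ≤ _ := by
        rw [← card_image_of_injOn hinj]
        exact_mod_cast card_le_card hsub
  · intro D' hD'
    obtain ⟨hX, hZ⟩ := card_outN_inter_inN_of_mem_eulerianCommonOut hV hD'
    have hsub : (eulerianCommonOut v w (k + 1)).bipartiteBelow IsSwitch D' ⊆
        ((D'.inN v ∩ D'.outN w) ×ˢ (D'.outN v ∩ D'.inN w)).image
          fun p => D'.reverseTriangle v p.1 p.2 := by
      simp only [subset_iff, mem_image, mem_bipartiteBelow]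
      rintro D ⟨-, p, hp, rfl⟩
      exact ⟨p, mem_product_of_mem_switches hvw hp, reverseTriangle_reverseTriangle⟩
    have hcard := (card_le_card hsub).trans card_image_le
    rw [card_product, show (D'.inN v ∩ D'.outN w).card = d + 2 by omega,
      show (D'.outN v ∩ D'.inN w).card = d + 1 by omega] at hcard
    exact_mod_cast hcard

theorem coe_eulerianCommonOut : (eulerianCommonOut v w k : Set (Digraph' V)) =
    {D | D.IsTournament ∧ D.IsEulerian ∧ D.Adj v w ∧ (D.outN v ∩ D.outN w).card = k} := by
  ext D
  simp [mem_eulerianCommonOut]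

theorem card_eulerianCommonOut_le_ncard :
    (eulerianCommonOut v w k).card ≤ {D : Digraph' V | D.IsTournament ∧ D.IsEulerian}.ncard := by
  rw [← Set.ncard_coe_finset, coe_eulerianCommonOut]
  exact Set.ncard_le_ncard fun D hD => ⟨hD.1, hD.2.1⟩

theorem card_eulerianCommonOut_mul_le (hV : Fintype.card V = 2 * (m + 3) + 1) (hvw : v ≠ w) :
    ((eulerianCommonOut v w (m + 2)).card : ℝ) * ((m + 3) * (m + 2) * ((m + 1) * m)) ≤
      48 * (eulerianCommonOut v w m).card := by
  have h1 := card_eulerianCommonOut_succ_mul_le (k := m + 1) (d := 0) hV hvw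
  have h2 := card_eulerianCommonOut_succ_mul_le (k := m) (d := 1) hV hvw
  norm_num at h1 h2
  calc ((eulerianCommonOut v w (m + 2)).card : ℝ) * ((m + 3) * (m + 2) * ((m + 1) * m))
      = 4 * ((eulerianCommonOut v w (m + 2)).card * ((m + 1 + 1) * (m + 1 + 2) / 2)) *
          ((m + 1) * m / 2) := by ring
    _ ≤ 4 * ((eulerianCommonOut v w (m + 1)).card * 2) * ((m + 1) * m / 2) := by gcongr
    _ = 8 * ((eulerianCommonOut v w (m + 1)).card * ((m + 1) * m / 2)) := by ring
    _ ≤ 48 * (eulerianCommonOut v w m).card := by linarith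

end Digraph'

theorem pow_four_le_mul {x : ℝ} (hx : 3 ≤ x) :
    (x + 3) ^ 4 ≤ 8 * ((x + 3) * (x + 2) * ((x + 1) * x)) :=
  calc (x + 3) ^ 4 = (x + 3) * (x + 3) * (x + 3) * (x + 3) := by ring
    _ ≤ (x + 3) * (2 * (x + 2)) * (2 * (x + 1)) * (2 * x) := by gcongr <;> linarith
    _ = _ := by ring

theorem eulerian_tournament_switching_bound (n : ℕ) (hn : 16 ≤ n)
    (v w : Fin (2 * n + 1)) (hvw : v ≠ w) :
    (({D : Digraph' (Fin (2 * n + 1)) |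
        D.IsTournament ∧ D.IsEulerian ∧ D.Adj v w = true ∧
          (D.outN v ∩ D.outN w).card = n - 1}).ncard : ℝ)
      ≤ 2 ^ 14 / (n : ℝ) ^ 4 *
        (({D : Digraph' (Fin (2 * n + 1)) | D.IsTournament ∧ D.IsEulerian}).ncard : ℝ) := by
  open Digraph' in
  obtain ⟨m, rfl⟩ : ∃ m, n = m + 3 := ⟨n - 3, by omega⟩
  have hstep := card_eulerianCommonOut_mul_le (Fintype.card_fin _) hvw
  have hsub : ((eulerianCommonOut v w m).card : ℝ) ≤
      {D : Digraph' (Fin (2 * (m + 3) + 1)) | D.IsTournament ∧ D.IsEulerian}.ncard := by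
    exact_mod_cast card_eulerianCommonOut_le_ncard (v := v) (w := w) (k := m)
  have hpow := pow_four_le_mul (x := m) (by exact_mod_cast (by omega : 3 ≤ m))
  rw [show m + 3 - 1 = m + 2 by omega, ← coe_eulerianCommonOut, Set.ncard_coe_finset,
    div_mul_eq_mul_div, le_div_iff₀ (by positivity)]
  push_cast
  calc ((eulerianCommonOut v w (m + 2)).card : ℝ) * (m + 3) ^ 4
      ≤ (eulerianCommonOut v w (m + 2)).card * (8 * ((m + 3) * (m + 2) * ((m + 1) * m))) := by
        gcongr
    _ ≤ 8 * (48 * (eulerianCommonOut v w m).card) := by linarith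
    _ ≤ _ := by linarith
end

section
/- Let D be a digraph and suppose v ∈ V(D) is a source (i.e., N^-(v) = ∅) such that N^+(v) contains every non-source vertex, i.e., {u ∈ V(D) : N^-(u) ≠ ∅} ⊆ N^+(v). Then for every restriction vector r, S_D(r) = Σ_{u : N^-(u) ≠ ∅} r_u. -/
open Finset

theorem value_of_dominant_source {V : Type} [Fintype V] [DecidableEq V] [Nonempty V]
    (D : Digraph' V) (v : V) (hsrc : D.inN v = ∅)
    (hcov : ∀ u : V, D.inN u ≠ ∅ → u ∈ D.outN v) :
    ∀ r : V → ℕ, D.value r = ∑ u ∈ Finset.univ.filter (fun u => D.inN u ≠ ∅), (r u : ℝ) := by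
  suffices h : ∀ n (r : V → ℕ), ∑ u, r u = n →
      D.valueAux n r = ∑ u ∈ Finset.univ.filter (fun u => D.inN u ≠ ∅), (r u : ℝ) by
    intro r; exact h _ r rfl
  intro n
  induction n with
  | zero =>
    intro r hr
    have h0 : ∀ u, r u = 0 := fun u =>
      (Finset.sum_eq_zero_iff.mp hr) u (Finset.mem_univ u)
    simp [Digraph'.valueAux, h0]
  | succ n ih =>
    intro r hr
    have hne : ¬ ∀ u, r u = 0 := by
      intro h; simp [h] at hr
    -- sum after removing one token
    have hsub : ∀ u, r u ≠ 0 → ∑ w, (r w - if w = u then 1 else 0) = n := by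
      intro u hu
      have h1 := Finset.add_sum_erase Finset.univ r (Finset.mem_univ u)
      have h2 := Finset.add_sum_erase Finset.univ
        (fun w => r w - if w = u then 1 else 0) (Finset.mem_univ u)
      have h3 : ∑ w ∈ Finset.univ.erase u, (r w - if w = u then 1 else 0)
          = ∑ w ∈ Finset.univ.erase u, r w := by
        apply Finset.sum_congr rfl
        intro w hw
        rw [Finset.mem_erase] at hw
        simp [hw.1]
      rw [h3] at h2
      simp only [↓reduceIte] at h2
      omega
    -- filtered sum after removing one token
    have hfsub : ∀ u, r u ≠ 0 →
        (∑ w ∈ Finset.univ.filter (fun w => D.inN w ≠ ∅),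
          ((r w - if w = u then 1 else 0 : ℕ) : ℝ))
        = (∑ w ∈ Finset.univ.filter (fun w => D.inN w ≠ ∅), (r w : ℝ))
          - (if D.inN u ≠ ∅ then (1:ℝ) else 0) := by
      intro u hu
      by_cases hu2 : D.inN u ≠ ∅
      · have hm : u ∈ Finset.univ.filter (fun w => D.inN w ≠ ∅) := by
          simp [hu2]
        rw [if_pos hu2, ← Finset.add_sum_erase _ _ hm,
          ← Finset.add_sum_erase _ (fun w => (r w : ℝ)) hm]
        have h3 : ∑ w ∈ (Finset.univ.filter (fun w => D.inN w ≠ ∅)).erase u,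
            ((r w - if w = u then 1 else 0 : ℕ) : ℝ)
            = ∑ w ∈ (Finset.univ.filter (fun w => D.inN w ≠ ∅)).erase u, (r w : ℝ) := by
          apply Finset.sum_congr rfl
          intro w hw
          rw [Finset.mem_erase] at hw
          simp [hw.1]
        rw [h3]
        have h4 : (1:ℕ) ≤ r u := Nat.one_le_iff_ne_zero.mpr hu
        rw [if_pos rfl, Nat.cast_sub h4]
        push_cast
        ring
      · rw [if_neg hu2, sub_zero]
        apply Finset.sum_congr rfl
        intro w hw
        rw [Finset.mem_filter] at hw
        have hwu : w ≠ u := by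
          intro h; exact hu2 (h ▸ hw.2)
        simp [hwu]
    rw [Digraph'.valueAux, if_neg hne]
    set f : ℝ := ∑ u ∈ Finset.univ.filter (fun u => D.inN u ≠ ∅), (r u : ℝ) with hf
    -- lower bound
    have hlb : ∀ x ∈ { x : ℝ | ∃ p : V → ℝ, (∀ u, 0 ≤ p u) ∧ (∑ u, p u = 1) ∧
        (∀ u, p u ≠ 0 → r u ≠ 0) ∧
        x = D.payoff p + ∑ u, p u * D.valueAux n
          (fun w => r w - if w = u then 1 else 0) }, f ≤ x := by
      rintro x ⟨p, hp0, hp1, hps, hx⟩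
      have hterm : ∀ u, p u * D.valueAux n (fun w => r w - if w = u then 1 else 0)
          = p u * (f - if D.inN u ≠ ∅ then (1:ℝ) else 0) := by
        intro u
        by_cases hpu : p u = 0
        · simp [hpu]
        · rw [ih _ (hsub u (hps u hpu)), hfsub u (hps u hpu)]
      have hsum2 : ∑ u, p u * D.valueAux n (fun w => r w - if w = u then 1 else 0)
          = f - ∑ u ∈ Finset.univ.filter (fun u => D.inN u ≠ ∅), p u := by
        rw [Finset.sum_congr rfl (fun u _ => hterm u)]
        have : ∑ u, p u * (f - if D.inN u ≠ ∅ then (1:ℝ) else 0)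
            = (∑ u, p u) * f - ∑ u, (if D.inN u ≠ ∅ then p u else 0) := by
          rw [Finset.sum_mul, ← Finset.sum_sub_distrib]
          apply Finset.sum_congr rfl
          intro u _
          by_cases h : D.inN u ≠ ∅ <;> simp [h] <;> ring
        rw [this, hp1, one_mul, Finset.sum_filter]
      have hpay : (∑ u ∈ Finset.univ.filter (fun u => D.inN u ≠ ∅), p u) ≤ D.payoff p := by
        have h1 : (∑ u ∈ D.outN v, p u) - ∑ u ∈ D.inN v, p u ≤ D.payoff p :=
          le_csSup (Set.Finite.bddAbove (Set.finite_range _)) ⟨v, rfl⟩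
        rw [hsrc, Finset.sum_empty, sub_zero] at h1
        refine le_trans ?_ h1
        apply Finset.sum_le_sum_of_subset_of_nonneg
        · intro u hu
          rw [Finset.mem_filter] at hu
          exact hcov u hu.2
        · intro u _ _; exact hp0 u
      rw [hx, hsum2]
      linarith
    -- membership
    have hex : ∃ u, r u ≠ 0 := by
      by_contra h
      push_neg at h
      exact hne h
    obtain ⟨u0, hu0⟩ := hex
    have hpayoff : D.payoff (fun w => if w = u0 then (1:ℝ) else 0)
        = (if D.inN u0 ≠ ∅ then (1:ℝ) else 0) := by
      have hg : (fun w => (∑ u ∈ D.outN w, if u = u0 then (1:ℝ) else 0)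
            - ∑ u ∈ D.inN w, if u = u0 then (1:ℝ) else 0)
          = fun w => (if u0 ∈ D.outN w then (1:ℝ) else 0)
            - (if u0 ∈ D.inN w then (1:ℝ) else 0) := by
        funext w
        rw [Finset.sum_ite_eq' (D.outN w) u0 (fun _ => (1:ℝ)),
          Finset.sum_ite_eq' (D.inN w) u0 (fun _ => (1:ℝ))]
      unfold Digraph'.payoff
      rw [hg]
      by_cases h1 : D.inN u0 ≠ ∅
      · rw [if_pos h1]
        obtain ⟨w0, hw0⟩ := Finset.nonempty_iff_ne_empty.mpr h1
        have hadj : D.Adj w0 u0 = true := by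
          simpa [Digraph'.inN] using hw0
        have hout : u0 ∈ D.outN w0 := by simp [Digraph'.outN, hadj]
        have hin : u0 ∉ D.inN w0 := by
          simp [Digraph'.inN, D.asymm _ _ hadj]
        apply le_antisymm
        · apply csSup_le (Set.range_nonempty _)
          rintro x ⟨w, rfl⟩
          dsimp only
          have h2 : (if u0 ∈ D.outN w then (1:ℝ) else 0) ≤ 1 := by
            split <;> norm_num
          have h3 : (0:ℝ) ≤ (if u0 ∈ D.inN w then (1:ℝ) else 0) := by
            split <;> norm_num
          linarith
        · refine le_csSup (Set.Finite.bddAbove (Set.finite_range _)) ⟨w0, ?_⟩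
          dsimp only
          rw [if_pos hout, if_neg hin]
          norm_num
      · rw [if_neg h1]
        push_neg at h1
        apply le_antisymm
        · apply csSup_le (Set.range_nonempty _)
          rintro x ⟨w, rfl⟩
          dsimp only
          have hout : u0 ∉ D.outN w := by
            intro h
            have : w ∈ D.inN u0 := by
              simp only [Digraph'.outN, Finset.mem_filter] at h
              simp [Digraph'.inN, h.2]
            rw [h1] at this
            exact absurd this (Finset.notMem_empty w)
          have h3 : (0:ℝ) ≤ (if u0 ∈ D.inN w then (1:ℝ) else 0) := by
            split <;> norm_num
          rw [if_neg hout]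
          linarith
        · refine le_csSup (Set.Finite.bddAbove (Set.finite_range _)) ⟨u0, ?_⟩
          dsimp only
          have hout : u0 ∉ D.outN u0 := by simp [Digraph'.outN, D.irrefl]
          have hin : u0 ∉ D.inN u0 := by simp [Digraph'.inN, D.irrefl]
          rw [if_neg hout, if_neg hin]
          norm_num
    have hmem : f ∈ { x : ℝ | ∃ p : V → ℝ, (∀ u, 0 ≤ p u) ∧ (∑ u, p u = 1) ∧
        (∀ u, p u ≠ 0 → r u ≠ 0) ∧
        x = D.payoff p + ∑ u, p u * D.valueAux n
          (fun w => r w - if w = u then 1 else 0) } := by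
      refine ⟨fun w => if w = u0 then (1:ℝ) else 0, ?_, ?_, ?_, ?_⟩
      · intro u; dsimp only; split <;> norm_num
      · simp
      · intro u hu
        have : u = u0 := by by_contra h; simp [h] at hu
        rwa [this]
      · have hcollapse : ∑ u, (if u = u0 then (1:ℝ) else 0)
            * D.valueAux n (fun w => r w - if w = u then 1 else 0)
            = D.valueAux n (fun w => r w - if w = u0 then 1 else 0) := by
          simp [ite_mul]
        rw [hcollapse, hpayoff, ih _ (hsub u0 hu0), hfsub u0 hu0]
        ring
    exact le_antisymm
      (csInf_le ⟨f, hlb⟩ hmem)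
      (le_csInf ⟨f, hmem⟩ hlb)
end
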